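/- For the single-qubit T gate T = diag(1, e^{iπ/4}), the average over all 16 ordered pairs of single-qubit Pauli matrices P₁, P₂ ∈ {I, X, Y, Z} of |(1/2)·Tr(T†P₁T·P₂·T†P₁T·P₂)| equals 3/4; equivalently, the Pauli instability of T is 𝕀(T) = log(4/3). -/

import Mathlib

open Matrix Complex

noncomputable section

/-- The four single-qubit Pauli matrices `I, X, Y, Z`. -/
def pauliMat : Fin 4 → Matrix (Fin 2) (Fin 2) ℂ
  | 0 => 1
  | 1 => !![0, 1; 1, 0]
  | 2 => !![0, -Complex.I; Complex.I, 0]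
  | 3 => !![1, 0; 0, -1]

/-- The `k`-th binary digit of `i : Fin (2^n)`. -/
def qubit {n : ℕ} (k : Fin n) (i : Fin (2 ^ n)) : Fin 2 :=
  ⟨(i : ℕ) / 2 ^ (k : ℕ) % 2, Nat.mod_lt _ (by norm_num)⟩

/-- `n`-fold Kronecker product of single-qubit matrices, as a `2^n × 2^n` matrix. -/
def nfold (n : ℕ) (f : Fin n → Matrix (Fin 2) (Fin 2) ℂ) :
    Matrix (Fin (2 ^ n)) (Fin (2 ^ n)) ℂ :=
  Matrix.of fun i j => ∏ k : Fin n, f k (qubit k i) (qubit k j)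

/-- The `n`-qubit Pauli string `P⁽¹⁾ ⊗ ⋯ ⊗ P⁽ⁿ⁾` labelled by `s : Fin n → Fin 4`. -/
def PauliString (n : ℕ) (s : Fin n → Fin 4) : Matrix (Fin (2 ^ n)) (Fin (2 ^ n)) ℂ :=
  nfold n fun k => pauliMat (s k)

/-- The out-of-time-ordered correlator `2^{-n}·Tr(U†P₁U·P₂·U†P₁U·P₂)`. -/
def OTOC (n : ℕ) (U P₁ P₂ : Matrix (Fin (2 ^ n)) (Fin (2 ^ n)) ℂ) : ℂ :=
  (2 ^ n : ℂ)⁻¹ * (Uᴴ * P₁ * U * P₂ * Uᴴ * P₁ * U * P₂).trace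

/-- The Pauli instability `𝕀(U) = -log( 16^{-n} Σ_{P₁,P₂} |OTOC(U,P₁,P₂)| )`. -/
def pauliInstability (n : ℕ) (U : Matrix (Fin (2 ^ n)) (Fin (2 ^ n)) ℂ) : ℝ :=
  -Real.log ((16 ^ n : ℝ)⁻¹ * ∑ s₁ : Fin n → Fin 4, ∑ s₂ : Fin n → Fin 4,
      norm (OTOC n U (PauliString n s₁) (PauliString n s₂)))

/-- `V` is Clifford: it maps every Pauli string to a Pauli string up to a phase. -/
def IsClifford (n : ℕ) (V : Matrix (Fin (2 ^ n)) (Fin (2 ^ n)) ℂ) : Prop :=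
  ∀ s : Fin n → Fin 4, ∃ (s' : Fin n → Fin 4) (φ : ℝ),
    Vᴴ * PauliString n s * V = Complex.exp (-(φ * Complex.I)) • PauliString n s'


/-- The T gate `T = diag(1, e^{iπ/4})`. -/
def Tgate : Matrix (Fin 2) (Fin 2) ℂ :=
  !![1, 0; 0, Complex.exp (Real.pi / 4 * Complex.I)]

set_option maxHeartbeats 2000000 in
/-- The average over all 16 ordered pairs of single-qubit Pauli matrices of
`|(1/2)·Tr(T†P₁T·P₂·T†P₁T·P₂)|` equals `3/4`; equivalently `𝕀(T) = log(4/3)`. -/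
theorem tgate_otoc_average :
    (16 : ℝ)⁻¹ * ∑ a : Fin 4, ∑ b : Fin 4,
        norm ((2 : ℂ)⁻¹ *
          (Tgateᴴ * pauliMat a * Tgate * pauliMat b *
            Tgateᴴ * pauliMat a * Tgate * pauliMat b).trace) = 3 / 4 ∧
      -Real.log ((16 : ℝ)⁻¹ * ∑ a : Fin 4, ∑ b : Fin 4,
        norm ((2 : ℂ)⁻¹ *
          (Tgateᴴ * pauliMat a * Tgate * pauliMat b *
            Tgateᴴ * pauliMat a * Tgate * pauliMat b).trace)) = Real.log (4 / 3) := by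
  set e : ℂ := Complex.exp (Real.pi / 4 * Complex.I) with heq
  set c : ℂ := (starRingEnd ℂ) e with hceq
  have hI : Complex.I ^ 2 = -1 := Complex.I_sq
  have hce : c * e = 1 := by
    rw [hceq, heq, ← Complex.exp_conj, ← Complex.exp_add]
    rw [show (starRingEnd ℂ) ((Real.pi:ℂ)/4 * Complex.I) + (Real.pi:ℂ)/4 * Complex.I = 0 by
      simp [map_div₀, Complex.conj_I, Complex.conj_ofReal, map_ofNat]]
    exact Complex.exp_zero
  have he2 : e * e = Complex.I := by
    rw [heq, ← Complex.exp_add,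
      show (Real.pi:ℂ)/4 * Complex.I + (Real.pi:ℂ)/4 * Complex.I
        = (↑(Real.pi/2) : ℂ) * Complex.I by push_cast; ring, Complex.exp_mul_I]
    simp
  have hc2 : c * c = -Complex.I := by
    rw [hceq, ← RingHom.map_mul, he2, Complex.conj_I]
  have hT : Tgateᴴ = !![1, 0; 0, c] := by
    rw [hceq, heq]
    ext i j
    fin_cases i <;> fin_cases j <;>
      simp [Tgate, Matrix.conjTranspose_apply]
  have h00 : (Tgateᴴ * pauliMat 0 * Tgate * pauliMat 0 *
      Tgateᴴ * pauliMat 0 * Tgate * pauliMat 0).trace = (2 : ℂ) := by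
    rw [hT]
    simp only [pauliMat, Tgate, ← heq, Matrix.one_fin_two, Matrix.mul_fin_two,
      Matrix.trace_fin_two_of, Matrix.cons_val', Matrix.cons_val_zero,
      Matrix.cons_val_one, Matrix.head_cons, Matrix.empty_val',
      Matrix.cons_val_fin_one, Matrix.head_fin_const]
    linear_combination c^2 * he2 + Complex.I * hc2 + (-1:ℂ) * hI
  have h01 : (Tgateᴴ * pauliMat 0 * Tgate * pauliMat 1 *
      Tgateᴴ * pauliMat 0 * Tgate * pauliMat 1).trace = (2 : ℂ) := by
    rw [hT]
    simp only [pauliMat, Tgate, ← heq, Matrix.one_fin_two, Matrix.mul_fin_two,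
      Matrix.trace_fin_two_of, Matrix.cons_val', Matrix.cons_val_zero,
      Matrix.cons_val_one, Matrix.head_cons, Matrix.empty_val',
      Matrix.cons_val_fin_one, Matrix.head_fin_const]
    linear_combination (2:ℂ) * hce
  have h02 : (Tgateᴴ * pauliMat 0 * Tgate * pauliMat 2 *
      Tgateᴴ * pauliMat 0 * Tgate * pauliMat 2).trace = (2 : ℂ) := by
    rw [hT]
    simp only [pauliMat, Tgate, ← heq, Matrix.one_fin_two, Matrix.mul_fin_two,
      Matrix.trace_fin_two_of, Matrix.cons_val', Matrix.cons_val_zero,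
      Matrix.cons_val_one, Matrix.head_cons, Matrix.empty_val',
      Matrix.cons_val_fin_one, Matrix.head_fin_const]
    linear_combination (-2:ℂ)*e*c * hI + (2:ℂ) * hce
  have h03 : (Tgateᴴ * pauliMat 0 * Tgate * pauliMat 3 *
      Tgateᴴ * pauliMat 0 * Tgate * pauliMat 3).trace = (2 : ℂ) := by
    rw [hT]
    simp only [pauliMat, Tgate, ← heq, Matrix.one_fin_two, Matrix.mul_fin_two,
      Matrix.trace_fin_two_of, Matrix.cons_val', Matrix.cons_val_zero,
      Matrix.cons_val_one, Matrix.head_cons, Matrix.empty_val',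
      Matrix.cons_val_fin_one, Matrix.head_fin_const]
    linear_combination c^2 * he2 + Complex.I * hc2 + (-1:ℂ) * hI
  have h10 : (Tgateᴴ * pauliMat 1 * Tgate * pauliMat 0 *
      Tgateᴴ * pauliMat 1 * Tgate * pauliMat 0).trace = (2 : ℂ) := by
    rw [hT]
    simp only [pauliMat, Tgate, ← heq, Matrix.one_fin_two, Matrix.mul_fin_two,
      Matrix.trace_fin_two_of, Matrix.cons_val', Matrix.cons_val_zero,
      Matrix.cons_val_one, Matrix.head_cons, Matrix.empty_val',
      Matrix.cons_val_fin_one, Matrix.head_fin_const]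
    linear_combination (2:ℂ) * hce
  have h11 : (Tgateᴴ * pauliMat 1 * Tgate * pauliMat 1 *
      Tgateᴴ * pauliMat 1 * Tgate * pauliMat 1).trace = (0 : ℂ) := by
    rw [hT]
    simp only [pauliMat, Tgate, ← heq, Matrix.one_fin_two, Matrix.mul_fin_two,
      Matrix.trace_fin_two_of, Matrix.cons_val', Matrix.cons_val_zero,
      Matrix.cons_val_one, Matrix.head_cons, Matrix.empty_val',
      Matrix.cons_val_fin_one, Matrix.head_fin_const]
    linear_combination (1:ℂ) * he2 + (1:ℂ) * hc2
  have h12 : (Tgateᴴ * pauliMat 1 * Tgate * pauliMat 2 *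
      Tgateᴴ * pauliMat 1 * Tgate * pauliMat 2).trace = (0 : ℂ) := by
    rw [hT]
    simp only [pauliMat, Tgate, ← heq, Matrix.one_fin_two, Matrix.mul_fin_two,
      Matrix.trace_fin_two_of, Matrix.cons_val', Matrix.cons_val_zero,
      Matrix.cons_val_one, Matrix.head_cons, Matrix.empty_val',
      Matrix.cons_val_fin_one, Matrix.head_fin_const]
    linear_combination e^2 * hI + c^2 * hI + (-1:ℂ) * he2 + (-1:ℂ) * hc2
  have h13 : (Tgateᴴ * pauliMat 1 * Tgate * pauliMat 3 *
      Tgateᴴ * pauliMat 1 * Tgate * pauliMat 3).trace = ((-2) : ℂ) := by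
    rw [hT]
    simp only [pauliMat, Tgate, ← heq, Matrix.one_fin_two, Matrix.mul_fin_two,
      Matrix.trace_fin_two_of, Matrix.cons_val', Matrix.cons_val_zero,
      Matrix.cons_val_one, Matrix.head_cons, Matrix.empty_val',
      Matrix.cons_val_fin_one, Matrix.head_fin_const]
    linear_combination (-2:ℂ) * hce
  have h20 : (Tgateᴴ * pauliMat 2 * Tgate * pauliMat 0 *
      Tgateᴴ * pauliMat 2 * Tgate * pauliMat 0).trace = (2 : ℂ) := by
    rw [hT]
    simp only [pauliMat, Tgate, ← heq, Matrix.one_fin_two, Matrix.mul_fin_two,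
      Matrix.trace_fin_two_of, Matrix.cons_val', Matrix.cons_val_zero,
      Matrix.cons_val_one, Matrix.head_cons, Matrix.empty_val',
      Matrix.cons_val_fin_one, Matrix.head_fin_const]
    linear_combination (-2:ℂ)*e*c * hI + (2:ℂ) * hce
  have h21 : (Tgateᴴ * pauliMat 2 * Tgate * pauliMat 1 *
      Tgateᴴ * pauliMat 2 * Tgate * pauliMat 1).trace = (0 : ℂ) := by
    rw [hT]
    simp only [pauliMat, Tgate, ← heq, Matrix.one_fin_two, Matrix.mul_fin_two,
      Matrix.trace_fin_two_of, Matrix.cons_val', Matrix.cons_val_zero,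
      Matrix.cons_val_one, Matrix.head_cons, Matrix.empty_val',
      Matrix.cons_val_fin_one, Matrix.head_fin_const]
    linear_combination e^2 * hI + c^2 * hI + (-1:ℂ) * he2 + (-1:ℂ) * hc2
  have h22 : (Tgateᴴ * pauliMat 2 * Tgate * pauliMat 2 *
      Tgateᴴ * pauliMat 2 * Tgate * pauliMat 2).trace = (0 : ℂ) := by
    rw [hT]
    simp only [pauliMat, Tgate, ← heq, Matrix.one_fin_two, Matrix.mul_fin_two,
      Matrix.trace_fin_two_of, Matrix.cons_val', Matrix.cons_val_zero,
      Matrix.cons_val_one, Matrix.head_cons, Matrix.empty_val',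
      Matrix.cons_val_fin_one, Matrix.head_fin_const]
    linear_combination e^2*Complex.I^2 * hI + c^2*Complex.I^2 * hI + (-1:ℂ)*e^2 * hI + (-1:ℂ)*c^2 * hI + (1:ℂ) * he2 + (1:ℂ) * hc2
  have h23 : (Tgateᴴ * pauliMat 2 * Tgate * pauliMat 3 *
      Tgateᴴ * pauliMat 2 * Tgate * pauliMat 3).trace = ((-2) : ℂ) := by
    rw [hT]
    simp only [pauliMat, Tgate, ← heq, Matrix.one_fin_two, Matrix.mul_fin_two,
      Matrix.trace_fin_two_of, Matrix.cons_val', Matrix.cons_val_zero,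
      Matrix.cons_val_one, Matrix.head_cons, Matrix.empty_val',
      Matrix.cons_val_fin_one, Matrix.head_fin_const]
    linear_combination (2:ℂ)*e*c * hI + (-2:ℂ) * hce
  have h30 : (Tgateᴴ * pauliMat 3 * Tgate * pauliMat 0 *
      Tgateᴴ * pauliMat 3 * Tgate * pauliMat 0).trace = (2 : ℂ) := by
    rw [hT]
    simp only [pauliMat, Tgate, ← heq, Matrix.one_fin_two, Matrix.mul_fin_two,
      Matrix.trace_fin_two_of, Matrix.cons_val', Matrix.cons_val_zero,
      Matrix.cons_val_one, Matrix.head_cons, Matrix.empty_val',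
      Matrix.cons_val_fin_one, Matrix.head_fin_const]
    linear_combination c^2 * he2 + Complex.I * hc2 + (-1:ℂ) * hI
  have h31 : (Tgateᴴ * pauliMat 3 * Tgate * pauliMat 1 *
      Tgateᴴ * pauliMat 3 * Tgate * pauliMat 1).trace = ((-2) : ℂ) := by
    rw [hT]
    simp only [pauliMat, Tgate, ← heq, Matrix.one_fin_two, Matrix.mul_fin_two,
      Matrix.trace_fin_two_of, Matrix.cons_val', Matrix.cons_val_zero,
      Matrix.cons_val_one, Matrix.head_cons, Matrix.empty_val',
      Matrix.cons_val_fin_one, Matrix.head_fin_const]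
    linear_combination (-2:ℂ) * hce
  have h32 : (Tgateᴴ * pauliMat 3 * Tgate * pauliMat 2 *
      Tgateᴴ * pauliMat 3 * Tgate * pauliMat 2).trace = ((-2) : ℂ) := by
    rw [hT]
    simp only [pauliMat, Tgate, ← heq, Matrix.one_fin_two, Matrix.mul_fin_two,
      Matrix.trace_fin_two_of, Matrix.cons_val', Matrix.cons_val_zero,
      Matrix.cons_val_one, Matrix.head_cons, Matrix.empty_val',
      Matrix.cons_val_fin_one, Matrix.head_fin_const]
    linear_combination (2:ℂ)*e*c * hI + (-2:ℂ) * hce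
  have h33 : (Tgateᴴ * pauliMat 3 * Tgate * pauliMat 3 *
      Tgateᴴ * pauliMat 3 * Tgate * pauliMat 3).trace = (2 : ℂ) := by
    rw [hT]
    simp only [pauliMat, Tgate, ← heq, Matrix.one_fin_two, Matrix.mul_fin_two,
      Matrix.trace_fin_two_of, Matrix.cons_val', Matrix.cons_val_zero,
      Matrix.cons_val_one, Matrix.head_cons, Matrix.empty_val',
      Matrix.cons_val_fin_one, Matrix.head_fin_const]
    linear_combination c^2 * he2 + Complex.I * hc2 + (-1:ℂ) * hI
  have H : ∑ a : Fin 4, ∑ b : Fin 4,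
      norm ((2 : ℂ)⁻¹ *
        (Tgateᴴ * pauliMat a * Tgate * pauliMat b *
          Tgateᴴ * pauliMat a * Tgate * pauliMat b).trace) = 12 := by
    simp only [Fin.sum_univ_four, h00, h01, h02, h03, h10, h11, h12, h13,
      h20, h21, h22, h23, h30, h31, h32, h33]
    norm_num [norm_mul, norm_inv, Complex.norm_two, Complex.norm_ofNat, norm_neg]
  rw [H]
  norm_num
  rw [show (3:ℝ)/4 = (4/3)⁻¹ by norm_num, Real.log_inv, neg_neg]

end
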